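/- arXiv:math/0110117 — 2 statements merged into one kernel-verified Lean document; each statement's English description precedes it below -/
import Mathlib

section
/- In the 5-dimensional real Lie algebra 𝔤 with basis e₁,…,e₅ and nonzero brackets [e₁,e₅] = e₄ − e₃, [e₂,e₅] = −e₁ + e₃ + e₄, [e₁,e₂] = e₃, every vector u ∈ 𝔤 satisfies [[u,x],[u,y]] = 0 for all x, y ∈ 𝔤. -/
/-- The Lie bracket on `ℝ^5` determined (0-indexed coordinates, `e₁ = ` index `0`, ...,
`e₅ = ` index `4`) by `[e₁,e₅] = e₄ − e₃`, `[e₂,e₅] = −e₁ + e₃ + e₄`, `[e₁,e₂] = e₃`,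
all other brackets of basis vectors being zero, extended by bilinearity and antisymmetry:
`[x,y] = (x₁y₅ − x₅y₁)(e₄ − e₃) + (x₂y₅ − x₅y₂)(−e₁ + e₃ + e₄) + (x₁y₂ − x₂y₁)e₃`. -/
noncomputable def br (x y : Fin 5 → ℝ) : Fin 5 → ℝ :=
  ![x 4 * y 1 - x 1 * y 4,
    0,
    (x 4 * y 0 - x 0 * y 4) + (x 1 * y 4 - x 4 * y 1) + (x 0 * y 1 - x 1 * y 0),
    (x 0 * y 4 - x 4 * y 0) + (x 1 * y 4 - x 4 * y 1),
    0]

/-- In the 5-dimensional real Lie algebra with nonzero brackets `[e₁,e₅] = e₄ − e₃`,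
`[e₂,e₅] = −e₁ + e₃ + e₄`, `[e₁,e₂] = e₃`, every vector `u` satisfies
`[[u,x],[u,y]] = 0` for all `x, y`. -/
theorem stmt_1 : ∀ u x y : Fin 5 → ℝ, br (br u x) (br u y) = 0 := by
  intro u x y
  funext i
  fin_cases i <;> simp [br] <;> ring
end

section
/- There exists a nondegenerate symmetric bilinear form B on the 5-dimensional real Lie algebra 𝔤 with nonzero brackets [e₁,e₅] = e₄ − e₃, [e₂,e₅] = −e₁ + e₃ + e₄, [e₁,e₂] = e₃ which is invariant, i.e. B([x,y],z) = B(x,[y,z]) for all x, y, z ∈ 𝔤. -/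
def medinaGram : Matrix (Fin 5) (Fin 5) ℝ :=
  !![-1, -1, 0, 0, 2;
     -1, 1, 0, -1, 0;
     0, 0, 0, 0, 1;
     0, -1, 0, 0, 1;
     2, 0, 1, 1, 0]

lemma medinaGram_isSymm : medinaGram.IsSymm := by
  ext i j; fin_cases i <;> fin_cases j <;> rfl

lemma det_medinaGram : medinaGram.det = -1 := by
  simp [medinaGram, Matrix.det_succ_row_zero, Fin.sum_univ_succ, Fin.succAbove]

lemma medinaGram_invariant (x y z : Fin 5 → ℝ) :
    medinaGram.toBilin' (br x y) z = medinaGram.toBilin' x (br y z) := by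
  simp only [Matrix.toBilin'_apply', dotProduct, Matrix.mulVec, Fin.sum_univ_five, medinaGram, br,
    Matrix.of_apply, Matrix.cons_val', Matrix.cons_val_zero, Matrix.cons_val_one, Matrix.cons_val,
    Matrix.cons_val_fin_one]
  ring

/-- There exists a nondegenerate symmetric bilinear form `B` on the 5-dimensional real
Lie algebra with nonzero brackets `[e₁,e₅] = e₄ − e₃`, `[e₂,e₅] = −e₁ + e₃ + e₄`,
`[e₁,e₂] = e₃` which is invariant: `B([x,y],z) = B(x,[y,z])` for all `x, y, z`. -/
theorem stmt_2 :
    ∃ B : (Fin 5 → ℝ) →ₗ[ℝ] (Fin 5 → ℝ) →ₗ[ℝ] ℝ,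
      (∀ x y : Fin 5 → ℝ, B x y = B y x) ∧
      (∀ x : Fin 5 → ℝ, (∀ y : Fin 5 → ℝ, B x y = 0) → x = 0) ∧
      (∀ x y z : Fin 5 → ℝ, B (br x y) z = B x (br y z)) :=
  ⟨medinaGram.toBilin', (Matrix.isSymm_toBilin'_iff_isSymm.mpr medinaGram_isSymm).eq,
    (LinearMap.BilinForm.nondegenerate_toBilin'_of_det_ne_zero' _ (by simp [det_medinaGram])).1,
    medinaGram_invariant⟩
end
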